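/- For every stochastic encoder Q with hint sets ℳ₁, ℳ₂, Eve's ambiguity is upper-bounded by A_E(Q) ≤ min( min(|ℳ₁|,|ℳ₂|)^ρ · A_B^l(Q), 2^{ρ·H_ᾱ(X|Y)} ). -/

import Mathlib

open Real Finset Filter
open scoped Classical

noncomputable section

/-- `G` is a guessing function for `𝒳` given side-information in `W`: for each
side-information value `w`, `x ↦ G x w` is a bijection from `𝒳` onto `{1, …, |𝒳|}`. -/
def IsGuessing {𝒳 W : Type*} [Fintype 𝒳] (G : 𝒳 → W → ℕ) : Prop :=
  ∀ w : W, (Function.Injective fun x => G x w) ∧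
    ∀ x, G x w ∈ Finset.Icc 1 (Fintype.card 𝒳)

/-- `P` is a probability mass function on `𝒳 × 𝒴` (written in curried form). -/
def IsPMF {𝒳 𝒴 : Type*} [Fintype 𝒳] [Fintype 𝒴] (P : 𝒳 → 𝒴 → ℝ) : Prop :=
  (∀ x y, 0 ≤ P x y) ∧ ∑ x, ∑ y, P x y = 1

/-- `Q` is a conditional PMF on `M` given `(x, y)`. -/
def IsCondPMF {𝒳 𝒴 M : Type*} [Fintype M] (Q : 𝒳 → 𝒴 → M → ℝ) : Prop :=
  ∀ x y, (∀ m, 0 ≤ Q x y m) ∧ ∑ m, Q x y m = 1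

/-- Conditional Rényi entropy of order `α` (base-2 logarithms). -/
def condRenyi {𝒳 𝒴 : Type*} [Fintype 𝒳] [Fintype 𝒴] (α : ℝ) (P : 𝒳 → 𝒴 → ℝ) : ℝ :=
  (α / (1 - α)) * Real.logb 2 (∑ y, (∑ x, P x y ^ α) ^ (1 / α))

/-- Bob's guessing ambiguity: the least `ρ`-th guessing moment over guessing
functions for `X` given `(Y, M₁, M₂)`. -/
def bobGuessAmb {𝒳 𝒴 M₁ M₂ : Type*} [Fintype 𝒳] [Fintype 𝒴] [Fintype M₁] [Fintype M₂]
    (ρ : ℝ) (P : 𝒳 → 𝒴 → ℝ) (Q : 𝒳 → 𝒴 → M₁ × M₂ → ℝ) : ℝ :=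
  sInf { e | ∃ G : 𝒳 → 𝒴 × M₁ × M₂ → ℕ, IsGuessing G ∧
    e = ∑ x, ∑ y, ∑ m : M₁ × M₂, P x y * Q x y m * (G x (y, m) : ℝ) ^ ρ }

/-- Eve's ambiguity: the least `ρ`-th moment of the minimum of two guessing
functions, one for `X` given `(Y, M₁)` and one for `X` given `(Y, M₂)`. -/
def eveAmb {𝒳 𝒴 M₁ M₂ : Type*} [Fintype 𝒳] [Fintype 𝒴] [Fintype M₁] [Fintype M₂]
    (ρ : ℝ) (P : 𝒳 → 𝒴 → ℝ) (Q : 𝒳 → 𝒴 → M₁ × M₂ → ℝ) : ℝ :=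
  sInf { e | ∃ G₁ : 𝒳 → 𝒴 × M₁ → ℕ, ∃ G₂ : 𝒳 → 𝒴 × M₂ → ℕ,
    IsGuessing G₁ ∧ IsGuessing G₂ ∧
    e = ∑ x, ∑ y, ∑ m : M₁ × M₂, P x y * Q x y m *
      ((min (G₁ x (y, m.1)) (G₂ x (y, m.2)) : ℕ) : ℝ) ^ ρ }

/-- Bob's list ambiguity: the `ρ`-th moment of the size of the list of all `x`
with positive posterior probability given `(Y, M₁, M₂)`. -/
def bobListAmb {𝒳 𝒴 M₁ M₂ : Type*} [Fintype 𝒳] [Fintype 𝒴] [Fintype M₁] [Fintype M₂]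
    (ρ : ℝ) (P : 𝒳 → 𝒴 → ℝ) (Q : 𝒳 → 𝒴 → M₁ × M₂ → ℝ) : ℝ :=
  ∑ x, ∑ y, ∑ m : M₁ × M₂, P x y * Q x y m *
    ((Finset.univ.filter fun x' => 0 < P x' y * Q x' y m).card : ℝ) ^ ρ

/-!
Both bounds come from explicit strategies for Eve. Ignoring the hints and guessing in decreasing
order of `P(·|y)` costs at most `∑_y (∑_x P(x,y)^ᾱ)^(1+ρ) = 2^{ρ H_ᾱ(X|Y)}` (Arikan's bound:
the `G`-th most likely `x` satisfies `G · P(x,y)^ᾱ ≤ ∑_x' P(x',y)^ᾱ`). Knowing `(y, m₂)`, Eve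
can instead rank `x` by the size of the smallest list `L^y_{m₁,m₂}` (over `m₁`) containing it;
the `x'` ranked no later than some `x ∈ L^y_{m₁,m₂}` lie in at most `|ℳ₁|` lists no larger than
`L^y_{m₁,m₂}`, so `G₂(x|y,m₂) ≤ |ℳ₁| · |L^y_{m₁,m₂}|`, and symmetrically for `G₁`.
-/

theorem IsGuessing.comp {𝒳 V W : Type*} [Fintype 𝒳] {G : 𝒳 → W → ℕ} (hG : IsGuessing G)
    (f : V → W) : IsGuessing fun x v => G x (f v) :=
  fun v => hG (f v)

theorem exists_isGuessing_le_card_filter_le {𝒳 W κ : Type*} [Fintype 𝒳] [LinearOrder κ]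
    (k : W → 𝒳 → κ) :
    ∃ G : 𝒳 → W → ℕ, IsGuessing G ∧ ∀ x w, G x w ≤ #{x' | k w x' ≤ k w x} := by
  let ι := Fintype.equivFin 𝒳
  -- break the ties of `k w` by an enumeration of `𝒳`
  let r : W → 𝒳 → κ ×ₗ ℕ := fun w x => toLex (k w x, (ι x : ℕ))
  have hr : ∀ w, Function.Injective (r w) := fun w a b hab =>
    ι.injective (Fin.ext (congrArg (fun p => (ofLex p).2) hab))
  have hstrict : ∀ w a b, r w a < r w b → #{x' | r w x' ≤ r w a} < #{x' | r w x' ≤ r w b} :=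
    fun w a b hab => card_lt_card <| (ssubset_iff_of_subset fun x hx => by
      simp only [mem_filter, mem_univ, true_and] at hx ⊢
      exact hx.trans hab.le).mpr ⟨b, by simp, by simp [hab]⟩
  refine ⟨fun x w => #{x' | r w x' ≤ r w x}, fun w => ⟨fun a b hab => ?_, fun x => ?_⟩,
    fun x w => card_le_card fun x' hx' => ?_⟩
  · by_contra hne
    rcases ((hr w).ne hne).lt_or_gt with h | h
    · exact (hstrict w a b h).ne hab
    · exact (hstrict w b a h).ne hab.symm
  · exact mem_Icc.mpr ⟨card_pos.mpr ⟨x, by simp⟩, card_le_univ _⟩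
  · simp only [mem_filter, mem_univ, true_and] at hx' ⊢
    exact (Prod.Lex.le_iff.mp hx').elim le_of_lt fun h => h.1.le

theorem sum_mul_rpow_le_sum_rpow_rpow {𝒳 : Type*} [Fintype 𝒳] {p : 𝒳 → ℝ} (hp : ∀ x, 0 ≤ p x)
    {ρ : ℝ} (hρ : 0 ≤ ρ) {G : 𝒳 → ℕ} (hG : ∀ x, G x ≤ #{x' | p x ≤ p x'}) :
    ∑ x, p x * (G x : ℝ) ^ ρ ≤ (∑ x, p x ^ (1 / (1 + ρ))) ^ (1 + ρ) := by
  have hα : 1 / (1 + ρ) + 1 / (1 + ρ) * ρ = 1 := by field_simp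
  set α := 1 / (1 + ρ)
  set S := ∑ x, p x ^ α
  have hS : 0 ≤ S := sum_nonneg fun x _ => rpow_nonneg (hp x) _
  have hrank : ∀ x, (G x : ℝ) * p x ^ α ≤ S := fun x => calc
    (G x : ℝ) * p x ^ α ≤ #{x' | p x ≤ p x'} • p x ^ α := by
        rw [nsmul_eq_mul]
        exact mul_le_mul_of_nonneg_right (by exact_mod_cast hG x) (rpow_nonneg (hp x) _)
    _ ≤ ∑ x' ∈ {x' | p x ≤ p x'}, p x' ^ α :=
        card_nsmul_le_sum _ _ _ fun x' hx' =>
          rpow_le_rpow (hp x) (mem_filter.mp hx').2 (by positivity)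
    _ ≤ S := sum_le_sum_of_subset_of_nonneg (filter_subset _ _)
        fun x' _ _ => rpow_nonneg (hp x') _
  have hsplit : ∀ x, p x = p x ^ α * (p x ^ α) ^ ρ := fun x => by
    rw [← rpow_mul (hp x), ← rpow_add' (hp x) (by rw [hα]; norm_num), hα, rpow_one]
  calc ∑ x, p x * (G x : ℝ) ^ ρ = ∑ x, p x ^ α * ((G x : ℝ) * p x ^ α) ^ ρ := by
        refine sum_congr rfl fun x _ => ?_
        rw [mul_rpow (Nat.cast_nonneg _) (rpow_nonneg (hp x) _)]
        conv_lhs => rw [hsplit x]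
        ring
    _ ≤ ∑ x, p x ^ α * S ^ ρ := sum_le_sum fun x _ => mul_le_mul_of_nonneg_left
        (rpow_le_rpow (mul_nonneg (Nat.cast_nonneg _) (rpow_nonneg (hp x) _)) (hrank x) hρ)
        (rpow_nonneg (hp x) _)
    _ = S ^ (1 + ρ) := by
        rw [← sum_mul, rpow_add' hS (by positivity), rpow_one]

/-- `⊤` when no member of `L` contains `x`. -/
def minCardContaining {ι α : Type*} [Fintype ι] (L : ι → Finset α) (x : α) : ℕ∞ :=
  (univ.filter fun i => x ∈ L i).inf fun i => (#(L i) : ℕ∞)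

section MinCardContaining

variable {ι α : Type*} [Fintype ι] (L : ι → Finset α)

theorem minCardContaining_le {x : α} {i : ι} (hx : x ∈ L i) :
    minCardContaining L x ≤ #(L i) :=
  inf_le (by simpa using hx)

theorem exists_mem_card_le_of_minCardContaining_le {x : α} {n : ℕ}
    (h : minCardContaining L x ≤ n) : ∃ i, x ∈ L i ∧ #(L i) ≤ n := by
  obtain ⟨i, hi, hle⟩ := (Finset.inf_le_iff (ENat.natCast_lt_top n)).mp h
  exact ⟨i, by simpa using hi, ENat.natCast_le_natCast.mp hle⟩

theorem card_minCardContaining_le_le [Fintype α] {x : α} {i : ι} (hx : x ∈ L i) :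
    #{x' | minCardContaining L x' ≤ minCardContaining L x} ≤ Fintype.card ι * #(L i) := by
  let small : Finset ι := {j | #(L j) ≤ #(L i)}
  have hcover : ({x' | minCardContaining L x' ≤ minCardContaining L x} : Finset α) ⊆
      small.biUnion L := by
    intro x' hx'
    obtain ⟨j, hj, hle⟩ := exists_mem_card_le_of_minCardContaining_le L
      (((mem_filter.mp hx').2).trans (minCardContaining_le L hx))
    exact mem_biUnion.mpr ⟨j, by simpa [small] using hle, hj⟩
  calc #{x' | minCardContaining L x' ≤ minCardContaining L x}
      ≤ #(small.biUnion L) := card_le_card hcover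
    _ ≤ ∑ j ∈ small, #(L j) := card_biUnion_le
    _ ≤ #small * #(L i) := by
        simpa using sum_le_card_nsmul small _ _ fun j hj => (mem_filter.mp hj).2
    _ ≤ Fintype.card ι * #(L i) := Nat.mul_le_mul_right _ (card_le_univ _)

end MinCardContaining

theorem exists_isGuessing_le_card_mul_card {𝒳 W ι : Type*} [Fintype 𝒳] [Fintype ι]
    (L : W → ι → Finset 𝒳) :
    ∃ G : 𝒳 → W → ℕ, IsGuessing G ∧
      ∀ w i x, x ∈ L w i → G x w ≤ Fintype.card ι * #(L w i) := by
  obtain ⟨G, hG, hGle⟩ :=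
    exists_isGuessing_le_card_filter_le fun w => minCardContaining (L w)
  exact ⟨G, hG, fun w i x hx => (hGle x w).trans (card_minCardContaining_le_le (L w) hx)⟩

section Ambiguity

variable {𝒳 𝒴 M₁ M₂ : Type*} [Fintype 𝒳] [Fintype 𝒴] [Fintype M₁] [Fintype M₂]
  {ρ : ℝ} {P : 𝒳 → 𝒴 → ℝ} {Q : 𝒳 → 𝒴 → M₁ × M₂ → ℝ}

theorem eveAmb_le_of_isGuessing (hP : ∀ x y, 0 ≤ P x y) (hQ : ∀ x y m, 0 ≤ Q x y m)
    {G₁ : 𝒳 → 𝒴 × M₁ → ℕ} {G₂ : 𝒳 → 𝒴 × M₂ → ℕ} (h₁ : IsGuessing G₁) (h₂ : IsGuessing G₂) :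
    eveAmb ρ P Q ≤ ∑ x, ∑ y, ∑ m : M₁ × M₂, P x y * Q x y m *
      ((min (G₁ x (y, m.1)) (G₂ x (y, m.2)) : ℕ) : ℝ) ^ ρ := by
  refine csInf_le ⟨0, ?_⟩ ⟨G₁, G₂, h₁, h₂, rfl⟩
  rintro e ⟨H₁, H₂, -, -, rfl⟩
  exact sum_nonneg fun x _ => sum_nonneg fun y _ => sum_nonneg fun m _ =>
    mul_nonneg (mul_nonneg (hP x y) (hQ x y m)) (by positivity)

theorem eveAmb_le_min_card_rpow_mul_bobListAmb (hρ : 0 ≤ ρ) (hP : ∀ x y, 0 ≤ P x y)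
    (hQ : ∀ x y m, 0 ≤ Q x y m) :
    eveAmb ρ P Q ≤ (min (Fintype.card M₁) (Fintype.card M₂) : ℝ) ^ ρ * bobListAmb ρ P Q := by
  let L : 𝒴 → M₁ × M₂ → Finset 𝒳 := fun y m => {x' | 0 < P x' y * Q x' y m}
  obtain ⟨G₁, hG₁, hG₁le⟩ :=
    exists_isGuessing_le_card_mul_card fun (w : 𝒴 × M₁) m₂ => L w.1 (w.2, m₂)
  obtain ⟨G₂, hG₂, hG₂le⟩ :=
    exists_isGuessing_le_card_mul_card fun (w : 𝒴 × M₂) m₁ => L w.1 (m₁, w.2)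
  refine (eveAmb_le_of_isGuessing hP hQ hG₁ hG₂).trans ?_
  simp only [bobListAmb, mul_sum]
  refine sum_le_sum fun x _ => sum_le_sum fun y _ => sum_le_sum fun m _ => ?_
  rcases (mul_nonneg (hP x y) (hQ x y m)).eq_or_lt with hzero | hpos
  · simp [← hzero]
  have hx : x ∈ L y m := by simpa [L] using hpos
  have hmin : ((min (G₁ x (y, m.1)) (G₂ x (y, m.2)) : ℕ) : ℝ) ≤
      (min (Fintype.card M₁) (Fintype.card M₂) : ℝ) * #(L y m) := by
    rw [min_mul_of_nonneg _ _ (Nat.cast_nonneg _), Nat.cast_min]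
    exact le_min (le_trans (min_le_right _ _) (by exact_mod_cast hG₂le (y, m.2) m.1 x hx))
      (le_trans (min_le_left _ _) (by exact_mod_cast hG₁le (y, m.1) m.2 x hx))
  calc P x y * Q x y m * ((min (G₁ x (y, m.1)) (G₂ x (y, m.2)) : ℕ) : ℝ) ^ ρ
      ≤ P x y * Q x y m * ((min (Fintype.card M₁) (Fintype.card M₂) : ℝ) * #(L y m)) ^ ρ := by
        gcongr
    _ = _ := by rw [mul_rpow (by positivity) (by positivity)]; ring

theorem eveAmb_le_sum_sum_rpow_rpow (hρ : 0 ≤ ρ) (hP : ∀ x y, 0 ≤ P x y) (hQ : IsCondPMF Q) :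
    eveAmb ρ P Q ≤ ∑ y, (∑ x, P x y ^ (1 / (1 + ρ))) ^ (1 + ρ) := by
  obtain ⟨G, hG, hGle⟩ := exists_isGuessing_le_card_filter_le fun y x => OrderDual.toDual (P x y)
  calc eveAmb ρ P Q
      ≤ ∑ x, ∑ y, ∑ m : M₁ × M₂, P x y * Q x y m * ((min (G x y) (G x y) : ℕ) : ℝ) ^ ρ :=
        eveAmb_le_of_isGuessing (G₁ := fun x w => G x w.1) (G₂ := fun x w => G x w.1) hP
          (fun x y => (hQ x y).1) (hG.comp Prod.fst) (hG.comp Prod.fst)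
    _ = ∑ y, ∑ x, P x y * (G x y : ℝ) ^ ρ := by
        rw [sum_comm]
        refine sum_congr rfl fun y _ => sum_congr rfl fun x _ => ?_
        rw [min_self, ← sum_mul, ← mul_sum, (hQ x y).2, mul_one]
    _ ≤ ∑ y, (∑ x, P x y ^ (1 / (1 + ρ))) ^ (1 + ρ) :=
        sum_le_sum fun y _ => sum_mul_rpow_le_sum_rpow_rpow (fun x => hP x y) hρ
          fun x => by simpa using hGle x y

end Ambiguity

theorem two_rpow_mul_condRenyi {𝒳 𝒴 : Type*} [Fintype 𝒳] [Fintype 𝒴] {P : 𝒳 → 𝒴 → ℝ}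
    (hP : IsPMF P) {ρ : ℝ} (hρ : 0 < ρ) :
    (2 : ℝ) ^ (ρ * condRenyi (1 / (1 + ρ)) P) = ∑ y, (∑ x, P x y ^ (1 / (1 + ρ))) ^ (1 + ρ) := by
  obtain ⟨x₀, y₀, hpos⟩ : ∃ x y, 0 < P x y := by
    by_contra! h
    have := hP.2
    rw [sum_eq_zero fun x _ => sum_eq_zero fun y _ => (h x y).antisymm (hP.1 x y)] at this
    exact zero_ne_one this
  have hinner : ∀ y, 0 ≤ ∑ x, P x y ^ (1 / (1 + ρ)) := fun y =>
    sum_nonneg fun x _ => rpow_nonneg (hP.1 x y) _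
  have hsum : 0 < ∑ y, (∑ x, P x y ^ (1 / (1 + ρ))) ^ (1 + ρ) :=
    sum_pos' (fun y _ => rpow_nonneg (hinner y) _) ⟨y₀, mem_univ _, rpow_pos_of_pos
      (sum_pos' (fun x _ => rpow_nonneg (hP.1 x y₀) _) ⟨x₀, mem_univ _, rpow_pos_of_pos hpos _⟩) _⟩
  have hcoef : ρ * (1 / (1 + ρ) / (1 - 1 / (1 + ρ))) = 1 := by
    field_simp
    rw [add_sub_cancel_left, div_self hρ.ne']
  rw [condRenyi, one_div_one_div, ← mul_assoc, hcoef, one_mul,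
    rpow_logb two_pos (by norm_num) hsum]

theorem finite_blocklength_list_converse_eve_general
    {𝒳 𝒴 M₁ M₂ : Type*} [Fintype 𝒳] [Fintype 𝒴] [Fintype M₁] [Fintype M₂]
    (ρ : ℝ) (hρ : 0 < ρ) (P : 𝒳 → 𝒴 → ℝ) (hP : IsPMF P)
    (Q : 𝒳 → 𝒴 → M₁ × M₂ → ℝ) (hQ : IsCondPMF Q) :
    eveAmb ρ P Q ≤
      min ((min (Fintype.card M₁) (Fintype.card M₂) : ℝ) ^ ρ * bobListAmb ρ P Q)
        (2 ^ (ρ * condRenyi (1 / (1 + ρ)) P)) := by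
  refine le_min (eveAmb_le_min_card_rpow_mul_bobListAmb hρ.le hP.1 fun x y => (hQ x y).1) ?_
  rw [two_rpow_mul_condRenyi hP hρ]
  exact eveAmb_le_sum_sum_rpow_rpow hρ.le hP.1 hQ

theorem finite_blocklength_list_converse_eve
    {𝒳 𝒴 M₁ M₂ : Type*} [Fintype 𝒳] [Fintype 𝒴] [Fintype M₁] [Fintype M₂]
    [Nonempty 𝒳] [Nonempty 𝒴] [Nonempty M₁] [Nonempty M₂]
    (ρ : ℝ) (hρ : 0 < ρ) (P : 𝒳 → 𝒴 → ℝ) (hP : IsPMF P)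
    (Q : 𝒳 → 𝒴 → M₁ × M₂ → ℝ) (hQ : IsCondPMF Q) :
    eveAmb ρ P Q ≤
      min ((min (Fintype.card M₁) (Fintype.card M₂) : ℝ) ^ ρ * bobListAmb ρ P Q)
        (2 ^ (ρ * condRenyi (1 / (1 + ρ)) P)) :=
  finite_blocklength_list_converse_eve_general ρ hρ P hP Q hQ
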